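/- arXiv:2308.14226 — 3 statements merged into one kernel-verified Lean document; each statement's English description precedes it below -/
import Mathlib

section
/- Let F be a free group with basis {g_j | j ∈ J}, N a normal subgroup of F, and D_k a Fox derivative of ℤ[F]. Then for every f ∈ F and n ∈ N, D_k(f⁻¹ n f) ≡ D_k(n)·f modulo the right ideal ℤ[F]·(N−1), where ℤ[F]·(N−1) denotes the right ideal of ℤ[F] generated by elements n−1 with n ∈ N. -/
open scoped Classical

/-- The augmentation map `ℤ[F] → ℤ` induced by the trivial homomorphism `F → 1`. -/
noncomputable def aug (J : Type) : MonoidAlgebra ℤ (FreeGroup J) →ₐ[ℤ] ℤ :=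
  MonoidAlgebra.lift ℤ ℤ (FreeGroup J) 1

/-- `D` is the Fox derivative of `ℤ[F]` with respect to the generator `g_k`:
it is ℤ-linear, satisfies `D(uv) = D(u)v + ε(u)D(v)`, and sends `g_j` to `δ_{kj}`. -/
def IsFoxDerivative {J : Type} (k : J)
    (D : MonoidAlgebra ℤ (FreeGroup J) →ₗ[ℤ] MonoidAlgebra ℤ (FreeGroup J)) : Prop :=
  (∀ u v : MonoidAlgebra ℤ (FreeGroup J), D (u * v) = D u * v + (aug J u) • D v) ∧
  (∀ j : J, D (MonoidAlgebra.of ℤ (FreeGroup J) (FreeGroup.of j)) = if k = j then 1 else 0)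

/-- The ideal `ℤ[F]·(N−1)` of `ℤ[F]` generated by the elements `n − 1`, `n ∈ N`. -/
noncomputable def NIdeal {J : Type} (N : Subgroup (FreeGroup J)) :
    Submodule ℤ (MonoidAlgebra ℤ (FreeGroup J)) :=
  Submodule.span ℤ {a | ∃ u : MonoidAlgebra ℤ (FreeGroup J), ∃ n ∈ N,
    a = u * (MonoidAlgebra.of ℤ (FreeGroup J) n - 1)}

/-- The ideal `d·ℤ[F]` of multiples of the integer `d`. -/
noncomputable def dIdeal {J : Type} (d : ℤ) : Submodule ℤ (MonoidAlgebra ℤ (FreeGroup J)) :=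
  Submodule.span ℤ {a | ∃ u : MonoidAlgebra ℤ (FreeGroup J), a = d • u}

/-!
Writing `d g` for `D_k(g)`, the product rule makes `d` a crossed homomorphism:
`d (g * h) = d g * h + d h`. Hence `d f⁻¹ * f = -d f`, and expanding `d (f⁻¹ * (n * f))` gives
`D_k(f⁻¹nf) - D_k(n) f = -D_k(f) (f⁻¹nf - 1)`, which lies in `ℤ[F]·(N−1)` because `N` is normal.
-/

def IsCrossedHom {G R : Type*} [Group G] [Ring R] (ρ : G →* R) (d : G → R) : Prop :=
  ∀ g h, d (g * h) = d g * ρ h + d h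

namespace IsCrossedHom

variable {G R : Type*} [Group G] [Ring R] {ρ : G →* R} {d : G → R}

theorem map_one (hd : IsCrossedHom ρ d) : d 1 = 0 := by
  simpa using hd 1 1

theorem map_inv_mul (hd : IsCrossedHom ρ d) (g : G) : d g⁻¹ * ρ g = -d g := by
  have h := hd g⁻¹ g
  rw [inv_mul_cancel, hd.map_one] at h
  exact eq_neg_of_add_eq_zero_left h.symm

theorem map_conj_sub (hd : IsCrossedHom ρ d) (f n : G) :
    d (f⁻¹ * n * f) - d n * ρ f = -d f * (ρ (f⁻¹ * n * f) - 1) := by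
  have hnf : ρ (n * f) = ρ f * ρ (f⁻¹ * n * f) := by
    rw [← map_mul]; group
  calc d (f⁻¹ * n * f) - d n * ρ f
      = d f⁻¹ * ρ (n * f) + d f := by
        rw [mul_assoc, hd, hd]; abel
    _ = -d f * (ρ (f⁻¹ * n * f) - 1) := by
        rw [hnf, ← mul_assoc, hd.map_inv_mul]; noncomm_ring

end IsCrossedHom

theorem IsFoxDerivative.isCrossedHom {J : Type} {k : J}
    {D : MonoidAlgebra ℤ (FreeGroup J) →ₗ[ℤ] MonoidAlgebra ℤ (FreeGroup J)}
    (hD : IsFoxDerivative k D) :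
    IsCrossedHom (MonoidAlgebra.of ℤ (FreeGroup J)) (fun g ↦ D (MonoidAlgebra.of ℤ _ g)) := by
  intro g h
  have hε : aug J (MonoidAlgebra.of ℤ _ g) = 1 := by simp [aug]
  simp only [map_mul, hD.1, hε, one_smul]

theorem mul_sub_one_mem_NIdeal {J : Type} {N : Subgroup (FreeGroup J)}
    (u : MonoidAlgebra ℤ (FreeGroup J)) {n : FreeGroup J} (hn : n ∈ N) :
    u * (MonoidAlgebra.of ℤ (FreeGroup J) n - 1) ∈ NIdeal N :=
  Submodule.subset_span ⟨u, n, hn, rfl⟩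

/-- For `f ∈ F` and `n ∈ N` (N normal), `D_k(f⁻¹nf) ≡ D_k(n)·f mod ℤ[F]·(N−1)`. -/
theorem fox_derivative_conj {J : Type} (k : J)
    (D : MonoidAlgebra ℤ (FreeGroup J) →ₗ[ℤ] MonoidAlgebra ℤ (FreeGroup J))
    (hD : IsFoxDerivative k D) (N : Subgroup (FreeGroup J)) (hN : N.Normal)
    (f : FreeGroup J) (n : FreeGroup J) (hn : n ∈ N) :
    D (MonoidAlgebra.of ℤ (FreeGroup J) (f⁻¹ * n * f)) -
      D (MonoidAlgebra.of ℤ (FreeGroup J) n) * MonoidAlgebra.of ℤ (FreeGroup J) f ∈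
      NIdeal N := by
  rw [hD.isCrossedHom.map_conj_sub f n]
  exact mul_sub_one_mem_NIdeal _ (by simpa using hN.conj_mem n hn f⁻¹)
end

section
/- Let F be a free group with basis {g_j | j ∈ J}, K ⊆ J, F_K the subgroup generated by {g_j | j ∈ K}, N a normal subgroup of F, d an integer with d ≠ 1, and let 𝔑 = ℤ[F]·(N−1) + d·ℤ[F]. If v ∈ F_K · ((F_K ∩ N)^F) · [N,N] · N^d, then D_k(v) ≡ 0 mod 𝔑 for every k ∈ J \ K, where N^d denotes the subgroup generated by d-th powers of elements of N and (F_K ∩ N)^F is the normal closure of F_K ∩ N in F. -/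
/-!
For fixed `k ∉ K`, the `g ∈ F` with `D_k(g) ∈ 𝔑` form a subgroup, since
`D_k(gh) = D_k(g) h + D_k(h)` and `𝔑` is stable under right multiplication by `F` (`N` is
normal); so it suffices to treat each factor. The generators of `F_K` have `D_k = 0`. Modulo
`ℤ[F]·(N−1)`, `D_k` restricted to `N` is a homomorphism into an abelian group, so it kills `[N,N]`
and sends `n^d` to `d·D_k(n) ∈ d·ℤ[F]`. Conjugates of `a ∈ F_K ∩ N` are handled by
`D_k(c a c⁻¹) = D_k(c)(a−1)c⁻¹ + D_k(a)c⁻¹`.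
-/

open scoped Classical

open scoped Pointwise

/-- The subgroup `N^d` generated by `d`-th powers of elements of `N`. -/
def powSubgroup {J : Type} (N : Subgroup (FreeGroup J)) (d : ℤ) : Subgroup (FreeGroup J) :=
  Subgroup.closure {x | ∃ n ∈ N, x = n ^ d}

/-- The set `F_K · ((F_K ∩ N)^F) · [N,N] · N^d`. -/
def bigSet {J : Type} (K : Set J) (N : Subgroup (FreeGroup J)) (d : ℤ) :
    Set (FreeGroup J) :=
  ((Subgroup.closure (FreeGroup.of '' K) : Subgroup (FreeGroup J)) : Set (FreeGroup J)) *
    ((Subgroup.normalClosure ((Subgroup.closure (FreeGroup.of '' K) ⊓ N :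
        Subgroup (FreeGroup J)) : Set (FreeGroup J))) : Set (FreeGroup J)) *
    ((⁅N, N⁆ : Subgroup (FreeGroup J)) : Set (FreeGroup J)) *
    ((powSubgroup N d : Subgroup (FreeGroup J)) : Set (FreeGroup J))

variable {J : Type}

open MonoidAlgebra (of)

theorem aug_of (g : FreeGroup J) : aug J (of ℤ _ g) = 1 := by
  simp [aug]

theorem Submodule.mul_mem_span_of_forall {R A : Type*} [CommSemiring R] [Semiring A]
    [Algebra R A] {s : Set A} {r : A} (hs : ∀ a ∈ s, a * r ∈ span R s) {x : A}
    (hx : x ∈ span R s) : x * r ∈ span R s := by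
  have hle : (span R s).map (LinearMap.mulRight R r) ≤ span R s := by
    rw [Submodule.map_span, Submodule.span_le]
    rintro _ ⟨a, ha, rfl⟩
    exact hs a ha
  exact hle ⟨x, hx, rfl⟩

theorem mul_of_sub_one_mem_NIdeal {N : Subgroup (FreeGroup J)}
    (u : MonoidAlgebra ℤ (FreeGroup J)) {n : FreeGroup J} (hn : n ∈ N) :
    u * (of ℤ _ n - 1) ∈ NIdeal N :=
  Submodule.subset_span ⟨u, n, hn, rfl⟩

theorem zsmul_mem_dIdeal (d : ℤ) (u : MonoidAlgebra ℤ (FreeGroup J)) : d • u ∈ dIdeal d :=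
  Submodule.subset_span ⟨u, rfl⟩

-- `u (n - 1) w = (u w) (w⁻¹ n w - 1)`, and `w⁻¹ n w ∈ N` by normality.
theorem NIdeal_sup_dIdeal_mul_of_mem {N : Subgroup (FreeGroup J)} (hN : N.Normal) (d : ℤ) :
    ∀ x ∈ NIdeal N ⊔ dIdeal d, ∀ w : FreeGroup J, x * of ℤ _ w ∈ NIdeal N ⊔ dIdeal d := by
  intro x hx w
  rw [NIdeal, dIdeal, ← Submodule.span_union] at hx ⊢
  refine Submodule.mul_mem_span_of_forall ?_ hx
  rintro a (⟨u, n, hn, rfl⟩ | ⟨u, rfl⟩)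
  · refine Submodule.subset_span (Or.inl ⟨u * of ℤ _ w, w⁻¹ * n * w, ?_, ?_⟩)
    · simpa using hN.conj_mem n hn w⁻¹
    · simp only [mul_sub, sub_mul, mul_one, mul_assoc, ← map_mul]
      group
  · exact Submodule.subset_span (Or.inr ⟨u * of ℤ _ w, smul_mul_assoc _ _ _⟩)

namespace IsFoxDerivative

open scoped commutatorElement

variable {k : J} {D : MonoidAlgebra ℤ (FreeGroup J) →ₗ[ℤ] MonoidAlgebra ℤ (FreeGroup J)}

theorem map_one (hD : IsFoxDerivative k D) : D 1 = 0 := by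
  simpa using hD.1 1 1

theorem map_of_mul (hD : IsFoxDerivative k D) (g h : FreeGroup J) :
    D (of ℤ _ (g * h)) = D (of ℤ _ g) * of ℤ _ h + D (of ℤ _ h) := by
  rw [_root_.map_mul, hD.1, aug_of, one_smul]

theorem map_of_inv (hD : IsFoxDerivative k D) (g : FreeGroup J) :
    D (of ℤ _ g⁻¹) = -(D (of ℤ _ g) * of ℤ _ g⁻¹) := by
  have h := hD.map_of_mul g g⁻¹
  rw [mul_inv_cancel, _root_.map_one, hD.map_one] at h
  exact eq_neg_of_add_eq_zero_right h.symm

theorem map_of_conj (hD : IsFoxDerivative k D) (c a : FreeGroup J) :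
    D (of ℤ _ (c * a * c⁻¹)) =
      D (of ℤ _ c) * (of ℤ _ a - 1) * of ℤ _ c⁻¹ + D (of ℤ _ a) * of ℤ _ c⁻¹ := by
  rw [hD.map_of_mul, hD.map_of_mul, hD.map_of_inv]
  noncomm_ring

noncomputable def toQuotientNIdeal (hD : IsFoxDerivative k D) (N : Subgroup (FreeGroup J)) :
    N →* Multiplicative (MonoidAlgebra ℤ (FreeGroup J) ⧸ NIdeal N) where
  toFun n := .ofAdd (Submodule.Quotient.mk (D (of ℤ _ n)))
  map_one' := by
    rw [OneMemClass.coe_one, _root_.map_one, hD.map_one, Submodule.Quotient.mk_zero, ofAdd_zero]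
  map_mul' n m := by
    rw [← ofAdd_add, ← Submodule.Quotient.mk_add, Subgroup.coe_mul, hD.map_of_mul]
    congr 1
    refine (Submodule.Quotient.eq _).mpr ?_
    convert mul_of_sub_one_mem_NIdeal (D (of ℤ _ n)) m.2 using 1
    noncomm_ring

theorem toQuotientNIdeal_apply (hD : IsFoxDerivative k D) {N : Subgroup (FreeGroup J)} (n : N) :
    (hD.toQuotientNIdeal N n).toAdd = Submodule.Quotient.mk (D (of ℤ _ n)) := rfl

theorem map_of_commutator_mem_NIdeal (hD : IsFoxDerivative k D) {N : Subgroup (FreeGroup J)}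
    {n m : FreeGroup J} (hn : n ∈ N) (hm : m ∈ N) : D (of ℤ _ ⁅n, m⁆) ∈ NIdeal N := by
  have h : hD.toQuotientNIdeal N ⁅(⟨n, hn⟩ : N), ⟨m, hm⟩⁆ = 1 := by
    rw [map_commutatorElement, commutatorElement_eq_one_iff_mul_comm]
    exact mul_comm _ _
  rw [← Submodule.Quotient.mk_eq_zero]
  exact congrArg Multiplicative.toAdd h

theorem map_of_zpow_sub_zsmul_mem_NIdeal (hD : IsFoxDerivative k D) {N : Subgroup (FreeGroup J)}
    {n : FreeGroup J} (hn : n ∈ N) (m : ℤ) : D (of ℤ _ (n ^ m)) - m • D (of ℤ _ n) ∈ NIdeal N := by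
  have h := congrArg Multiplicative.toAdd (map_zpow (hD.toQuotientNIdeal N) ⟨n, hn⟩ m)
  rw [toAdd_zpow, toQuotientNIdeal_apply, toQuotientNIdeal_apply] at h
  rw [← Submodule.Quotient.eq, Submodule.Quotient.mk_smul]
  exact h

def vanishingSubgroup (hD : IsFoxDerivative k D)
    (I : Submodule ℤ (MonoidAlgebra ℤ (FreeGroup J)))
    (hI : ∀ x ∈ I, ∀ w : FreeGroup J, x * of ℤ _ w ∈ I) : Subgroup (FreeGroup J) where
  carrier := {g | D (of ℤ _ g) ∈ I}
  one_mem' := by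
    rw [Set.mem_ofPred_eq, _root_.map_one, hD.map_one]
    exact I.zero_mem
  mul_mem' {g h} hg hh := by
    simpa only [Set.mem_ofPred_eq, hD.map_of_mul] using I.add_mem (hI _ hg h) hh
  inv_mem' {g} hg := by
    simpa only [Set.mem_ofPred_eq, hD.map_of_inv] using I.neg_mem (hI _ hg g⁻¹)

section vanishingSubgroup

variable (hD : IsFoxDerivative k D) {I : Submodule ℤ (MonoidAlgebra ℤ (FreeGroup J))}
  (hI : ∀ x ∈ I, ∀ w : FreeGroup J, x * of ℤ _ w ∈ I) {N : Subgroup (FreeGroup J)}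

theorem closure_le_vanishingSubgroup {K : Set J} (hk : k ∉ K) :
    Subgroup.closure (FreeGroup.of '' K) ≤ hD.vanishingSubgroup I hI := by
  rw [Subgroup.closure_le]
  rintro _ ⟨j, hj, rfl⟩
  change D (of ℤ _ (FreeGroup.of j)) ∈ I
  rw [hD.2 j, if_neg (ne_of_mem_of_not_mem hj hk).symm]
  exact I.zero_mem

theorem normalClosure_inf_le_vanishingSubgroup (hNI : NIdeal N ≤ I) {H : Subgroup (FreeGroup J)}
    (hH : H ≤ hD.vanishingSubgroup I hI) :
    Subgroup.normalClosure ((H ⊓ N : Subgroup (FreeGroup J)) : Set (FreeGroup J)) ≤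
      hD.vanishingSubgroup I hI := by
  rw [Subgroup.normalClosure, Subgroup.closure_le]
  intro x hx
  obtain ⟨a, ⟨haH, haN⟩, hconj⟩ := Group.mem_conjugatesOfSet_iff.mp hx
  obtain ⟨c, rfl⟩ := isConj_iff.mp hconj
  change D (of ℤ _ (c * a * c⁻¹)) ∈ I
  rw [hD.map_of_conj]
  exact I.add_mem (hI _ (hNI (mul_of_sub_one_mem_NIdeal _ haN)) _) (hI _ (hH haH) _)

theorem commutator_le_vanishingSubgroup (hNI : NIdeal N ≤ I) :
    ⁅N, N⁆ ≤ hD.vanishingSubgroup I hI := by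
  rw [Subgroup.commutator_le]
  intro n hn m hm
  exact hNI (hD.map_of_commutator_mem_NIdeal hn hm)

theorem powSubgroup_le_vanishingSubgroup (hNI : NIdeal N ≤ I) {d : ℤ} (hdI : dIdeal d ≤ I) :
    powSubgroup N d ≤ hD.vanishingSubgroup I hI := by
  rw [powSubgroup, Subgroup.closure_le]
  rintro _ ⟨n, hn, rfl⟩
  change D (of ℤ _ (n ^ d)) ∈ I
  rw [← sub_add_cancel (D (of ℤ _ (n ^ d))) (d • D (of ℤ _ n))]
  exact I.add_mem (hNI (hD.map_of_zpow_sub_zsmul_mem_NIdeal hn d))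
    (hdI (zsmul_mem_dIdeal d _))

end vanishingSubgroup

end IsFoxDerivative

theorem fox_congruence_of_mem_general {J : Type} (K : Set J) (N : Subgroup (FreeGroup J))
    (hN : N.Normal) (d : ℤ)
    (D : J → (MonoidAlgebra ℤ (FreeGroup J) →ₗ[ℤ] MonoidAlgebra ℤ (FreeGroup J)))
    (hD : ∀ j, IsFoxDerivative j (D j)) (v : FreeGroup J) (hv : v ∈ bigSet K N d) :
    ∀ k, k ∉ K → D k (MonoidAlgebra.of ℤ (FreeGroup J) v) ∈ NIdeal N ⊔ dIdeal d := by
  intro k hk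
  have hI := NIdeal_sup_dIdeal_mul_of_mem hN d
  let V := (hD k).vanishingSubgroup _ hI
  have hFK : Subgroup.closure (FreeGroup.of '' K) ≤ V := (hD k).closure_le_vanishingSubgroup hI hk
  obtain ⟨_, ⟨_, ⟨a, ha, b, hb, rfl⟩, c, hc, rfl⟩, e, he, rfl⟩ := hv
  refine V.mul_mem (V.mul_mem (V.mul_mem (hFK ha) ?_) ?_) ?_
  · exact (hD k).normalClosure_inf_le_vanishingSubgroup hI le_sup_left hFK hb
  · exact (hD k).commutator_le_vanishingSubgroup hI le_sup_left hc
  · exact (hD k).powSubgroup_le_vanishingSubgroup hI le_sup_left le_sup_right he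

/-- If `v ∈ F_K·((F_K ∩ N)^F)·[N,N]·N^d`, then `D_k(v) ≡ 0 mod 𝔑 = ℤ[F]·(N−1) + d·ℤ[F]`
for every `k ∈ J \ K`. -/
theorem fox_congruence_of_mem {J : Type} (K : Set J) (N : Subgroup (FreeGroup J))
    (hN : N.Normal) (d : ℤ) (hd : d ≠ 1)
    (D : J → (MonoidAlgebra ℤ (FreeGroup J) →ₗ[ℤ] MonoidAlgebra ℤ (FreeGroup J)))
    (hD : ∀ j, IsFoxDerivative j (D j)) (v : FreeGroup J) (hv : v ∈ bigSet K N d) :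
    ∀ k, k ∉ K → D k (MonoidAlgebra.of ℤ (FreeGroup J) v) ∈ NIdeal N ⊔ dIdeal d :=
  fox_congruence_of_mem_general K N hN d D hD v hv
end

section
/- Let F be a free group, N a normal subgroup of F, S a Schreier transversal for N in F with representative map u ↦ ū, and X the free basis of F. Then N is generated by the elements s·x·(\overline{sx})⁻¹ for s ∈ S, x ∈ X. -/
/-! Schreier's lemma (`Subgroup.closure_mul_image_eq`): if `G` is generated by `X` and `T` is a
right transversal of `H` with `1 ∈ T`, then `H` is generated by the elements `g * (overline g)⁻¹`,
`g ∈ T * X`. A Schreier transversal contains `1`, the empty word being a prefix of every word.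
For `g = s * x`, the representative `overline g` is the unique `t ∈ T` with `t * g⁻¹ ∈ H`, so
these generators are exactly the elements `s * x * t⁻¹` with `s, t ∈ T` and `t * (s * x)⁻¹ ∈ H`. -/

/-- `S` is a Schreier transversal for `N` in the free group: a set of right coset
representatives (each right coset `Nf` contains exactly one element of `S`) that is
closed under taking initial segments of reduced words. -/
def IsSchreierTransversal {α : Type} [DecidableEq α] (N : Subgroup (FreeGroup α))
    (S : Set (FreeGroup α)) : Prop :=
  (∀ f : FreeGroup α, ∃! s, s ∈ S ∧ s * f⁻¹ ∈ N) ∧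
  (∀ s ∈ S, ∀ t : FreeGroup α, t.toWord <+: s.toWord → t ∈ S)

open scoped Pointwise

namespace Subgroup.IsComplement

variable {G : Type*} [Group G] {H : Subgroup G} {T : Set G}

theorem toRightFun_eq_of_mul_inv_mem (hT : IsComplement H T) {g t : G} (ht : t ∈ T)
    (h : t * g⁻¹ ∈ H) : (hT.toRightFun g : G) = t := by
  have hgt : g * t⁻¹ ∈ H := by simpa using H.inv_mem h
  exact congrArg Subtype.val <| (isComplement_iff_existsUnique_mul_inv_mem.mp hT g).unique
    (hT.mul_inv_toRightFun_mem g) (y₂ := ⟨t, ht⟩) hgt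

theorem image_mul_inv_toRightFun_eq (hT : IsComplement H T) (X : Set G) :
    (T * X).image (fun g => g * (hT.toRightFun g : G)⁻¹) =
      {w | ∃ s ∈ T, ∃ x ∈ X, ∃ t ∈ T, t * (s * x)⁻¹ ∈ H ∧ w = s * x * t⁻¹} := by
  ext w
  constructor
  · rintro ⟨-, ⟨s, hs, x, hx, rfl⟩, rfl⟩
    exact ⟨s, hs, x, hx, _, (hT.toRightFun (s * x)).2, hT.toRightFun_mul_inv_mem _, rfl⟩
  · rintro ⟨s, hs, x, hx, t, ht, hH, rfl⟩
    refine ⟨s * x, Set.mul_mem_mul hs hx, ?_⟩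
    simp only [hT.toRightFun_eq_of_mul_inv_mem ht hH]

end Subgroup.IsComplement

namespace IsSchreierTransversal

variable {α : Type} [DecidableEq α] {N : Subgroup (FreeGroup α)} {S : Set (FreeGroup α)}

theorem isComplement (hS : IsSchreierTransversal N S) : Subgroup.IsComplement N S := by
  refine Subgroup.isComplement_iff_existsUnique_mul_inv_mem.mpr fun f => ?_
  obtain ⟨s, ⟨hs, hsf⟩, huniq⟩ := hS.1 f
  refine ⟨⟨s, hs⟩, by simpa using N.inv_mem hsf, fun t htf => Subtype.ext ?_⟩
  exact huniq t ⟨t.2, by simpa using N.inv_mem htf⟩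

theorem one_mem (hS : IsSchreierTransversal N S) : (1 : FreeGroup α) ∈ S := by
  obtain ⟨s, ⟨hs, -⟩, -⟩ := hS.1 1
  exact hS.2 s hs 1 (by simp)

end IsSchreierTransversal

theorem schreier_generators_general {α : Type} [DecidableEq α] (N : Subgroup (FreeGroup α))
    (S : Set (FreeGroup α)) (hS : IsSchreierTransversal N S) :
    N = Subgroup.closure {w | ∃ s ∈ S, ∃ j : α, ∃ t ∈ S,
      t * (s * FreeGroup.of j)⁻¹ ∈ N ∧ w = s * FreeGroup.of j * t⁻¹} := by
  have h := Subgroup.closure_mul_image_eq hS.isComplement hS.one_mem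
    (FreeGroup.closure_range_of α)
  rw [hS.isComplement.image_mul_inv_toRightFun_eq] at h
  simpa only [Set.exists_range_iff] using h.symm

/-- Reidemeister–Schreier: `N` is generated by the elements `s·x·(overline{sx})⁻¹`,
`s ∈ S`, `x` a basis element, where `overline{sx}` is the representative of `sx` in `S`. -/
theorem schreier_generators {α : Type} [DecidableEq α] (N : Subgroup (FreeGroup α))
    (hN : N.Normal) (S : Set (FreeGroup α)) (hS : IsSchreierTransversal N S) :
    N = Subgroup.closure {w | ∃ s ∈ S, ∃ j : α, ∃ t ∈ S,
      t * (s * FreeGroup.of j)⁻¹ ∈ N ∧ w = s * FreeGroup.of j * t⁻¹} :=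
  schreier_generators_general N S hS
end
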